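/- arXiv:1809.07118 — 2 statements merged into one kernel-verified Lean document; each statement's English description precedes it below -/
import Mathlib

section
/- Let R be a ℤ-graded ring. If R admits a partition of unity of type (1,−1), then for every n ≥ 1 the homogeneous component R_{−n} is a finitely generated projective left R_0-module. If R admits a partition of unity of type (−1,1), then for every n ≥ 1 the homogeneous component R_n is a finitely generated projective left R_0-module. -/
/-! Partitions of unity multiply: from ones `(α_j, β_j)` of type `(a, -a)` and `(γ_k, δ_k)` of
type `(b, -b)` the products `α_j γ_k`, `δ_k β_j` form one of type `(a + b, -(a + b))`, so a
partition of type `(∓1, ±1)` yields one of type `(∓n, ±n)`. A partition `(α_j, β_j)` of type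
`(-i, i)` exhibits `R_i` as a direct summand of `R_0^N`: the map `x ↦ (x α_j)_j` is split by
`c ↦ ∑ c_j β_j`, because `∑ x α_j β_j = x`. -/

/-- A partition of unity of type `(n, -n)` in the `ℤ`-graded ring `R`. -/
def HasPartitionOfUnity {R : Type*} [Ring R] (𝒜 : ℤ → AddSubgroup R) (n : ℤ) : Prop :=
  ∃ (N : ℕ) (α β : Fin N → R),
    (∀ j, α j ∈ 𝒜 n) ∧ (∀ j, β j ∈ 𝒜 (-n)) ∧ ∑ j, α j * β j = 1

/-- The left `R₀`-module structure on the homogeneous component `R_i` of an internally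
graded ring, given by multiplication. -/
noncomputable def gradeZeroModule {R : Type*} [Ring R] (𝒜 : ℤ → AddSubgroup R)
    [GradedRing 𝒜] (i : ℤ) : Module ↥(𝒜 0) ↥(𝒜 i) :=
  DirectSum.instModuleOfNat (A := fun i => ↥(𝒜 i))

namespace HasPartitionOfUnity

variable {R : Type*} [Ring R] {𝒜 : ℤ → AddSubgroup R}

theorem of_fintype {ι : Type*} [Fintype ι] {n : ℤ} (α β : ι → R) (hα : ∀ j, α j ∈ 𝒜 n)
    (hβ : ∀ j, β j ∈ 𝒜 (-n)) (hαβ : ∑ j, α j * β j = 1) : HasPartitionOfUnity 𝒜 n :=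
  let e := Fintype.equivFin ι
  ⟨Fintype.card ι, α ∘ e.symm, β ∘ e.symm, fun _ => hα _, fun _ => hβ _,
    (e.symm.sum_comp fun j => α j * β j).trans hαβ⟩

theorem zero [SetLike.GradedOne 𝒜] : HasPartitionOfUnity 𝒜 0 :=
  ⟨1, 1, 1, fun _ => SetLike.one_mem_graded 𝒜, fun _ => by simpa using SetLike.one_mem_graded 𝒜,
    by simp⟩

theorem add [SetLike.GradedMul 𝒜] {a b : ℤ} (ha : HasPartitionOfUnity 𝒜 a)
    (hb : HasPartitionOfUnity 𝒜 b) : HasPartitionOfUnity 𝒜 (a + b) := by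
  obtain ⟨N, α, β, hα, hβ, hαβ⟩ := ha
  obtain ⟨M, γ, δ, hγ, hδ, hγδ⟩ := hb
  refine of_fintype (ι := Fin N × Fin M) (fun p => α p.1 * γ p.2) (fun p => δ p.2 * β p.1)
    (fun p => SetLike.mul_mem_graded (hα _) (hγ _)) (fun p => ?_) ?_
  · rw [neg_add_rev]
    exact SetLike.mul_mem_graded (hδ _) (hβ _)
  · calc ∑ p : Fin N × Fin M, α p.1 * γ p.2 * (δ p.2 * β p.1)
        = ∑ j, α j * (∑ k, γ k * δ k) * β j := by
          simp only [Fintype.sum_prod_type, Finset.mul_sum, Finset.sum_mul, mul_assoc]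
      _ = 1 := by simp [hγδ, hαβ]

theorem nsmul [SetLike.GradedMonoid 𝒜] {a : ℤ} (h : HasPartitionOfUnity 𝒜 a) :
    ∀ m : ℕ, HasPartitionOfUnity 𝒜 (m • a)
  | 0 => by simpa using zero
  | m + 1 => by rw [succ_nsmul]; exact (h.nsmul m).add h

end HasPartitionOfUnity

section
variable {R : Type*} [Ring R] {𝒜 : ℤ → AddSubgroup R} [GradedRing 𝒜]

attribute [local instance] gradeZeroModule

theorem coe_gradeZero_smul {i : ℤ} (a : 𝒜 0) (x : 𝒜 i) : ((a • x : 𝒜 i) : R) = a * x := by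
  -- `a • x` is `GMul.mul a x : 𝒜 (0 + i)` transported along `zero_add i`.
  have coe_eqRec : ∀ {j k : ℤ} (h : j = k) (y : 𝒜 j), ((h ▸ y : 𝒜 k) : R) = y := by
    rintro j _ rfl y; rfl
  exact (coe_eqRec (zero_add i) _).trans (SetLike.coe_gMul 𝒜 a x)

def gradedMulRight {i j k : ℤ} (hk : i + k = j) {y : R} (hy : y ∈ 𝒜 k) : 𝒜 i →ₗ[𝒜 0] 𝒜 j where
  toFun x := ⟨x * y, hk ▸ SetLike.mul_mem_graded x.2 hy⟩
  map_add' x x' := Subtype.ext (add_mul ..)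
  map_smul' a x := Subtype.ext (by simp [coe_gradeZero_smul, mul_assoc])

@[simp]
theorem coe_gradedMulRight {i j k : ℤ} (hk : i + k = j) {y : R} (hy : y ∈ 𝒜 k) (x : 𝒜 i) :
    (gradedMulRight hk hy x : R) = x * y :=
  rfl

theorem HasPartitionOfUnity.finite_and_projective {i : ℤ} (h : HasPartitionOfUnity 𝒜 (-i)) :
    Module.Finite (𝒜 0) (𝒜 i) ∧ Module.Projective (𝒜 0) (𝒜 i) := by
  obtain ⟨N, α, β, hα, hβ, hαβ⟩ := h
  let f : 𝒜 i →ₗ[𝒜 0] Fin N → 𝒜 0 :=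
    LinearMap.pi fun j => gradedMulRight (add_neg_cancel i) (hα j)
  let g : (Fin N → 𝒜 0) →ₗ[𝒜 0] 𝒜 i :=
    ∑ j, (gradedMulRight (zero_add i) (by simpa using hβ j)).comp (LinearMap.proj j)
  have hgf : g ∘ₗ f = LinearMap.id := by
    refine LinearMap.ext fun x => Subtype.ext ?_
    calc ((g (f x) : 𝒜 i) : R) = ∑ j, x * α j * β j := by
          simp only [g, LinearMap.sum_apply, AddSubgroup.val_finsetSum]
          rfl
      _ = x := by simp only [mul_assoc, ← Finset.mul_sum, hαβ, mul_one]
  exact ⟨.of_surjective g fun x => ⟨f x, LinearMap.congr_fun hgf x⟩, .of_split f g hgf⟩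

end

/-- **Lemma.**  Let `R` be a `ℤ`-graded ring.  If `R` admits a partition of unity of
type `(1, -1)`, then for every `n ≥ 1` the homogeneous component `R_{-n}` is a finitely
generated projective left `R₀`-module.  If `R` admits a partition of unity of type
`(-1, 1)`, then for every `n ≥ 1` the homogeneous component `R_n` is a finitely
generated projective left `R₀`-module. -/
theorem components_fg_projective_of_pou {R : Type*} [Ring R] (𝒜 : ℤ → AddSubgroup R)
    [GradedRing 𝒜] :
    (HasPartitionOfUnity 𝒜 1 → ∀ n : ℤ, 1 ≤ n →
      @Module.Finite ↥(𝒜 0) ↥(𝒜 (-n)) _ _ (gradeZeroModule 𝒜 (-n)) ∧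
      @Module.Projective ↥(𝒜 0) _ ↥(𝒜 (-n)) _ (gradeZeroModule 𝒜 (-n))) ∧
    (HasPartitionOfUnity 𝒜 (-1) → ∀ n : ℤ, 1 ≤ n →
      @Module.Finite ↥(𝒜 0) ↥(𝒜 n) _ _ (gradeZeroModule 𝒜 n) ∧
      @Module.Projective ↥(𝒜 0) _ ↥(𝒜 n) _ (gradeZeroModule 𝒜 n)) := by
  refine ⟨fun h n hn => ?_, fun h n hn => ?_⟩ <;> lift n to ℕ using by omega
  · exact HasPartitionOfUnity.finite_and_projective (by simpa using h.nsmul n)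
  · exact HasPartitionOfUnity.finite_and_projective (by simpa using h.nsmul n)
end

section
/- Let K be a ring, Σ a collection of square matrices over K, and f : K → S a ring homomorphism. Let f_*(Σ) be the collection of matrices f(A) (entrywise application of f) for A ∈ Σ. Suppose λ : K → L is a universal Σ-inverting ring homomorphism, λ′ : S → L′ is a universal f_*(Σ)-inverting ring homomorphism, and f̄ : L → L′ is a ring homomorphism with f̄ ∘ λ = λ′ ∘ f. Then the resulting commutative square is a pushout of unital rings: for every ring T and all ring homomorphisms β : S → T and α : L → T with α ∘ λ = β ∘ f, there is a unique ring homomorphism υ : L′ → T with υ ∘ λ′ = β and υ ∘ f̄ = α. -/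
universe u v

/-- A ring homomorphism `f : K → S` is `Σ`-inverting for a collection `Σ` of square
matrices over `K` (one set `Σ n` of `n × n` matrices for each `n`) if the entrywise
image under `f` of every matrix in `Σ` is invertible over `S`. -/
def IsMatInverting {K : Type u} {S : Type v} [Ring K] [Ring S]
    (Sig : ∀ n : ℕ, Set (Matrix (Fin n) (Fin n) K)) (f : K →+* S) : Prop :=
  ∀ (n : ℕ), ∀ A ∈ Sig n, IsUnit (A.map f)

/-- A `Σ`-inverting ring homomorphism `lam : K → L` is universal if every
`Σ`-inverting ring homomorphism `f : K → S` factors uniquely through it. -/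
def IsUniversalMatInverting {K : Type u} {L : Type u} [Ring K] [Ring L]
    (Sig : ∀ n : ℕ, Set (Matrix (Fin n) (Fin n) K)) (lam : K →+* L) : Prop :=
  IsMatInverting Sig lam ∧
    ∀ (S : Type u) [Ring S] (f : K →+* S), IsMatInverting Sig f →
      ∃! g : L →+* S, g.comp lam = f

/-! Since `β ∘ f = α ∘ lam` inverts `Σ`, the map `β` inverts `f₊Σ` and so factors uniquely
through `lam'` as `υ`. Both `υ ∘ fbar` and `α` then restrict along `lam` to `β ∘ f`, so they
agree by the uniqueness half of the universal property of `lam`. -/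

section MatInverting

variable {K : Type u} [Ring K] {Sig : ∀ n : ℕ, Set (Matrix (Fin n) (Fin n) K)}

theorem IsMatInverting.comp {S T : Type v} [Ring S] [Ring T] {f : K →+* S}
    (hf : IsMatInverting Sig f) (g : S →+* T) : IsMatInverting Sig (g.comp f) := by
  intro n A hA
  simpa only [RingHom.mapMatrix_apply, Matrix.map_map, RingHom.coe_comp] using
    g.mapMatrix.isUnit_map (hf n A hA)

theorem isMatInverting_image_map_iff {S T : Type v} [Ring S] [Ring T] (f : K →+* S)
    (g : S →+* T) :
    IsMatInverting (fun n => (fun A : Matrix (Fin n) (Fin n) K => A.map f) '' Sig n) g ↔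
      IsMatInverting Sig (g.comp f) := by
  simp only [IsMatInverting, Set.forall_mem_image, Matrix.map_map, RingHom.coe_comp]

theorem IsUniversalMatInverting.hom_ext {L S : Type u} [Ring L] [Ring S] {lam : K →+* L}
    (hlam : IsUniversalMatInverting Sig lam) {g₁ g₂ : L →+* S}
    (h : g₁.comp lam = g₂.comp lam) : g₁ = g₂ :=
  (hlam.2 S _ (hlam.1.comp g₂)).unique h rfl

end MatInverting

/-- **Proposition (pushout by localisation).**  Let `Σ` be a collection of square
matrices over `K` and `f : K → S` a ring homomorphism; let `f₊Σ` be the collection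
of entrywise images under `f` of matrices in `Σ`.  Suppose `lam : K → L` is a
universal `Σ`-inverting homomorphism, `lam' : S → L'` is a universal
`f₊Σ`-inverting homomorphism, and `fbar : L → L'` satisfies `fbar ∘ lam = lam' ∘ f`.
Then the resulting commutative square is a pushout of unital rings: for every ring
`T` and homomorphisms `β : S → T`, `α : L → T` with `α ∘ lam = β ∘ f` there is a
unique `υ : L' → T` with `υ ∘ lam' = β` and `υ ∘ fbar = α`. -/
theorem localisation_pushout {K S L L' : Type u} [Ring K] [Ring S] [Ring L] [Ring L']
    (Sig : ∀ n : ℕ, Set (Matrix (Fin n) (Fin n) K)) (f : K →+* S)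
    (lam : K →+* L) (hlam : IsUniversalMatInverting Sig lam)
    (lam' : S →+* L')
    (hlam' : IsUniversalMatInverting
      (fun n => (fun A : Matrix (Fin n) (Fin n) K => A.map f) '' (Sig n)) lam')
    (fbar : L →+* L') (hsq : fbar.comp lam = lam'.comp f)
    (T : Type u) [Ring T] (β : S →+* T) (α : L →+* T)
    (hαβ : α.comp lam = β.comp f) :
    ∃! υ : L' →+* T, υ.comp lam' = β ∧ υ.comp fbar = α := by
  have hβ : IsMatInverting
      (fun n => (fun A : Matrix (Fin n) (Fin n) K => A.map f) '' (Sig n)) β :=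
    (isMatInverting_image_map_iff f β).mpr (hαβ ▸ hlam.1.comp α)
  obtain ⟨υ, hυ, huniq⟩ := hlam'.2 T β hβ
  have hυfbar : υ.comp fbar = α := hlam.hom_ext <| by
    rw [RingHom.comp_assoc, hsq, ← RingHom.comp_assoc, hυ, hαβ]
  exact ⟨υ, ⟨hυ, hυfbar⟩, fun υ' hυ' => huniq υ' hυ'.1⟩
end
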